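/- For natural numbers n and m with m ≤ n, the sum over k from 0 to n of C(n,k)^2 · (falling factorial k·(k-1)···(k-m+1)) equals C(2n,n) · Π_{j=0}^{m-1} (n-j)^2/(2n-j), as an identity of rational numbers (with 2n ≥ m ensuring nonzero denominators when n ≥ 1; for n = 0 both sides are interpreted with empty products when m = 0). -/

import Mathlib

/-!
Writing `k (k-1) ⋯ (k-m+1) = k^{(m)}`, the identity `C(n,k) k^{(m)} = n^{(m)} C(n-m, k-m)` turns the
sum into `n^{(m)} ∑ₖ C(n-m, k-m) C(n, n-k) = n^{(m)} C(2n-m, n-m)` by Vandermonde's identity, and the same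
identity applied to `C(2n, n) n^{(m)}` gives `(2n)^{(m)} C(2n-m, n-m)`, which accounts for the denominators.
-/

open Finset Nat

theorem prod_range_natCast_sub_eq_descFactorial {R : Type*} [CommRing R] (k m : ℕ) :
    ∏ j ∈ range m, ((k : R) - j) = k.descFactorial m := by
  rw [← descPochhammer_eval_eq_prod_range, descPochhammer_eval_eq_descFactorial]

theorem choose_mul_descFactorial {n k m : ℕ} (hmk : m ≤ k) :
    n.choose k * k.descFactorial m = n.descFactorial m * (n - m).choose (k - m) := by
  rw [descFactorial_eq_factorial_mul_choose, descFactorial_eq_factorial_mul_choose, mul_left_comm,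
    choose_mul hmk, mul_assoc]

theorem sum_range_choose_sq_mul_descFactorial {n m : ℕ} (hm : m ≤ n) :
    ∑ k ∈ range (n + 1), n.choose k ^ 2 * k.descFactorial m =
      n.descFactorial m * (2 * n - m).choose (n - m) := by
  have hvanish : ∑ k ∈ range m, n.choose k ^ 2 * k.descFactorial m = 0 :=
    sum_eq_zero fun k hk => by rw [descFactorial_eq_zero_iff_lt.2 (mem_range.1 hk), mul_zero]
  rw [show n + 1 = m + (n - m + 1) by omega, sum_range_add, hvanish, zero_add,
    show 2 * n - m = (n - m) + n by omega, add_choose_eq, Nat.sum_antidiagonal_eq_sum_range_succ_mk,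
    mul_sum]
  refine sum_congr rfl fun i hi => ?_
  have hin : m + i ≤ n := by rw [mem_range] at hi; omega
  rw [sq, mul_assoc, choose_mul_descFactorial (le_add_right m i), Nat.add_sub_cancel_left,
    ← choose_symm hin, show n - (m + i) = n - m - i by omega]
  ring

theorem stmt_19 (n m : ℕ) (hm : m ≤ n) :
    ∑ k ∈ Finset.range (n + 1),
      (n.choose k : ℚ) ^ 2 * ∏ j ∈ Finset.range m, ((k : ℚ) - j) =
    ((2 * n).choose n : ℚ) *
      ∏ j ∈ Finset.range m, ((n : ℚ) - j) ^ 2 / (2 * (n : ℚ) - j) := by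
  have hden : ∏ j ∈ range m, (2 * (n : ℚ) - j) = (2 * n).descFactorial m := by
    simpa using prod_range_natCast_sub_eq_descFactorial (R := ℚ) (2 * n) m
  have hden_ne : ((2 * n).descFactorial m : ℚ) ≠ 0 :=
    Nat.cast_ne_zero.2 (descFactorial_pos.2 (by omega)).ne'
  have hsum : ∑ k ∈ range (n + 1), (n.choose k : ℚ) ^ 2 * k.descFactorial m =
      n.descFactorial m * (2 * n - m).choose (n - m) := by
    exact_mod_cast sum_range_choose_sq_mul_descFactorial hm
  have hcentral : ((2 * n).choose n : ℚ) * n.descFactorial m =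
      (2 * n).descFactorial m * (2 * n - m).choose (n - m) := by
    exact_mod_cast choose_mul_descFactorial hm
  simp only [prod_range_natCast_sub_eq_descFactorial, prod_div_distrib, prod_pow, hden, hsum]
  rw [mul_div_assoc', eq_div_iff hden_ne]
  linear_combination -(n.descFactorial m : ℚ) * hcentral
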